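/- Let a, b, c > 0 and set a* := a, b* := √(2/3) s_* b, c* := (2/3) s_*² c. Let Q₀ := √(3/2)( e₃⊗e₃ − (1/3)Id ) ∈ S₀, and for p₁, p₂, p₃ ∈ ℝ let P ∈ S₀ be the matrix with rows (p₁, p₂, 0), (p₂, p₃, 0), (0, 0, −p₁−p₃). Then tr(P Q₀) = −√(3/2)(p₁ + p₃), and −a*|P|² − 2 b* tr(Q₀ P²) + 2 c* (tr(Q₀ P))² + c*|P|² ≥ (c* − a*)|P|², where c* − a* = (b² + b√(b² + 24ac))/(12c) > 0. (The left-hand side is the second derivative at t = 0 of t ↦ f*(Q₀ + tP); P is a generic normal vector to the vacuum manifold at Q₀.) -/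

import Mathlib

open Matrix

noncomputable section

abbrev M3 : Type := Matrix (Fin 3) (Fin 3) ℝ

def frob (Q : M3) : ℝ := Real.sqrt (∑ i, ∑ j, (Q i j) ^ 2)

def sstar (a b c : ℝ) : ℝ := (b + Real.sqrt (b ^ 2 + 24 * a * c)) / (4 * c)

def bstar (a b c : ℝ) : ℝ := Real.sqrt (2/3) * sstar a b c * b

def cstar (a b c : ℝ) : ℝ := (2/3) * (sstar a b c) ^ 2 * c

/-- The vector e₃ = (0,0,1). -/
def e3v : Fin 3 → ℝ := ![0, 0, 1]

/-- Q₀ = √(3/2)( e₃⊗e₃ − (1/3)Id ). -/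
def Q0 : M3 := Real.sqrt (3/2) • (vecMulVec e3v e3v - (1/3 : ℝ) • (1 : M3))

/-- The generic normal matrix P with rows (p₁,p₂,0), (p₂,p₃,0), (0,0,−p₁−p₃). -/
def Pmat (p1 p2 p3 : ℝ) : M3 := !![p1, p2, 0; p2, p3, 0; 0, 0, -p1-p3]

/-!
The equilibrium equation of the uniaxial branch, `2 c s_*² = b s_* + 3 a`, turns
`c* - a` into `b s_* / 3`. On the normal matrix `P` the traces `tr(Q₀P)` and `tr(Q₀P²)` are explicit
in `p₁, p₂, p₃`, and after this substitution the excess of the second variation over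
`(c* - a)|P|²` is the sum of squares `(b s_*/3)((p₁ - p₃)² + 4p₂²) + 3a(p₁ + p₃)²`.
-/

section Constants

variable {a b c : ℝ}

theorem two_mul_mul_sstar_sq (hc : c ≠ 0) (hdisc : 0 ≤ b ^ 2 + 24 * a * c) :
    2 * c * sstar a b c ^ 2 = b * sstar a b c + 3 * a := by
  have hr := Real.sq_sqrt hdisc
  rw [sstar]
  generalize Real.sqrt (b ^ 2 + 24 * a * c) = r at hr ⊢
  field_simp
  linear_combination 2 * hr

theorem cstar_sub_eq (hc : c ≠ 0) (hdisc : 0 ≤ b ^ 2 + 24 * a * c) :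
    cstar a b c - a = b * sstar a b c / 3 := by
  rw [cstar]
  linear_combination (1/3 : ℝ) * two_mul_mul_sstar_sq hc hdisc

theorem cstar_sub_eq_div (hc : c ≠ 0) (hdisc : 0 ≤ b ^ 2 + 24 * a * c) :
    cstar a b c - a = (b ^ 2 + b * Real.sqrt (b ^ 2 + 24 * a * c)) / (12 * c) := by
  rw [cstar_sub_eq hc hdisc, sstar]
  field_simp
  ring

theorem sstar_pos (hb : 0 < b) (hc : 0 < c) : 0 < sstar a b c := by
  unfold sstar
  positivity

theorem bstar_mul_sqrt_three_halves : bstar a b c * Real.sqrt (3/2) = sstar a b c * b := by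
  have h : Real.sqrt (2/3) * Real.sqrt (3/2) = 1 := by
    rw [← Real.sqrt_mul (by norm_num)]
    norm_num
  rw [bstar]
  linear_combination (sstar a b c * b) * h

end Constants

section Traces

variable (p1 p2 p3 : ℝ)

theorem Q0_eq : Q0 = Real.sqrt (3/2) • !![(-1/3 : ℝ), 0, 0; 0, -1/3, 0; 0, 0, 2/3] := by
  ext i j
  fin_cases i <;> fin_cases j <;>
    simp [Q0, e3v, one_apply] <;> norm_num

theorem trace_Q0_mul_Pmat :
    (Q0 * Pmat p1 p2 p3).trace = -Real.sqrt (3/2) * (p1 + p3) := by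
  rw [Q0_eq]
  simp [trace, Fin.sum_univ_three, Pmat]
  ring

theorem trace_Q0_mul_Pmat_sq :
    (Q0 * (Pmat p1 p2 p3 * Pmat p1 p2 p3)).trace =
      Real.sqrt (3/2) * ((2/3) * (p1 + p3) ^ 2 - (p1 ^ 2 + 2 * p2 ^ 2 + p3 ^ 2) / 3) := by
  rw [Q0_eq]
  simp [trace, Fin.sum_univ_three, Pmat]
  ring

theorem frob_Pmat_sq :
    frob (Pmat p1 p2 p3) ^ 2 = p1 ^ 2 + 2 * p2 ^ 2 + p3 ^ 2 + (p1 + p3) ^ 2 := by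
  rw [frob, Real.sq_sqrt (by positivity)]
  simp [Fin.sum_univ_three, Pmat]
  ring

end Traces

theorem second_variation_Pmat_eq {a b c : ℝ} (hc : c ≠ 0) (hdisc : 0 ≤ b ^ 2 + 24 * a * c)
    (p1 p2 p3 : ℝ) :
    -a * frob (Pmat p1 p2 p3) ^ 2
        - 2 * bstar a b c * (Q0 * (Pmat p1 p2 p3 * Pmat p1 p2 p3)).trace
        + 2 * cstar a b c * ((Q0 * Pmat p1 p2 p3).trace) ^ 2
        + cstar a b c * frob (Pmat p1 p2 p3) ^ 2 =
      (cstar a b c - a) * frob (Pmat p1 p2 p3) ^ 2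
        + b * sstar a b c / 3 * ((p1 - p3) ^ 2 + 4 * p2 ^ 2) + 3 * a * (p1 + p3) ^ 2 := by
  have hsqrt : Real.sqrt (3/2) ^ 2 = 3/2 := Real.sq_sqrt (by norm_num)
  have hcstar : cstar a b c = a + b * sstar a b c / 3 := by
    linear_combination cstar_sub_eq hc hdisc
  rw [trace_Q0_mul_Pmat, trace_Q0_mul_Pmat_sq, hcstar]
  linear_combination
    (-2 * ((2/3) * (p1 + p3) ^ 2 - (p1 ^ 2 + 2 * p2 ^ 2 + p3 ^ 2) / 3)) *
        bstar_mul_sqrt_three_halves (a := a) (b := b) (c := c)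
      + 2 * (a + b * sstar a b c / 3) * (p1 + p3) ^ 2 * hsqrt

/-- With a* = a, b* = √(2/3)s_* b, c* = (2/3)s_*² c: tr(P Q₀) = −√(3/2)(p₁+p₃),
−a*|P|² − 2b* tr(Q₀P²) + 2c*(tr(Q₀P))² + c*|P|² ≥ (c*−a*)|P|², and
c* − a* = (b² + b√(b² + 24ac))/(12c) > 0. -/
theorem stmt6 (a b c : ℝ) (ha : 0 < a) (hb : 0 < b) (hc : 0 < c) (p1 p2 p3 : ℝ) :
    (Pmat p1 p2 p3 * Q0).trace = -Real.sqrt (3/2) * (p1 + p3) ∧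
    (cstar a b c - a) * frob (Pmat p1 p2 p3) ^ 2 ≤
      -a * frob (Pmat p1 p2 p3) ^ 2
        - 2 * bstar a b c * (Q0 * (Pmat p1 p2 p3 * Pmat p1 p2 p3)).trace
        + 2 * cstar a b c * ((Q0 * Pmat p1 p2 p3).trace) ^ 2
        + cstar a b c * frob (Pmat p1 p2 p3) ^ 2 ∧
    cstar a b c - a = (b ^ 2 + b * Real.sqrt (b ^ 2 + 24 * a * c)) / (12 * c) ∧
    0 < cstar a b c - a := by
  have hdisc : 0 ≤ b ^ 2 + 24 * a * c := by positivity
  have hs := sstar_pos (a := a) hb hc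
  refine ⟨?_, ?_, cstar_sub_eq_div hc.ne' hdisc, ?_⟩
  · rw [trace_mul_comm, trace_Q0_mul_Pmat]
  · rw [second_variation_Pmat_eq hc.ne' hdisc]
    have : 0 ≤ b * sstar a b c / 3 * ((p1 - p3) ^ 2 + 4 * p2 ^ 2) + 3 * a * (p1 + p3) ^ 2 := by
      positivity
    linarith
  · rw [cstar_sub_eq hc.ne' hdisc]
    positivity
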